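/- arXiv:2410.01049 — 2 statements merged into one kernel-verified Lean document; each statement's English description precedes it below -/
import Mathlib

section
/- Every maximum induced matching of the Petersen graph has exactly 3 edges, and the 15 edges of the Petersen graph partition into 5 pairwise disjoint induced matchings of size 3. -/
open SimpleGraph

/-- Two edges (as elements of `Sym2 V`) are adjacent: distinct and sharing an endvertex. -/
def EdgeAdj {V : Type*} (e f : Sym2 V) : Prop := e ≠ f ∧ ∃ v, v ∈ e ∧ v ∈ f

/-- Two edges are at distance at most 2 in `G`: adjacent, or both adjacent to a common edge. -/
def DistLE2 {V : Type*} (G : SimpleGraph V) (e f : Sym2 V) : Prop :=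
  EdgeAdj e f ∨ ∃ g ∈ G.edgeSet, EdgeAdj e g ∧ EdgeAdj g f

/-- A strong edge-coloring: any two distinct edges at distance at most 2 get distinct colors. -/
def IsStrongEdgeColoring {V : Type*} (G : SimpleGraph V) {C : Type*} (φ : Sym2 V → C) : Prop :=
  ∀ e ∈ G.edgeSet, ∀ f ∈ G.edgeSet, DistLE2 G e f → φ e ≠ φ f

/-- Vertices of the Kneser graph K(5,2): 2-element subsets of a 5-element set. -/
abbrev PV := {s : Finset (Fin 5) // s.card = 2}

/-- The Petersen graph as the Kneser graph K(5,2): adjacency is disjointness. -/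
def petersen : SimpleGraph PV where
  Adj a b := Disjoint a.1 b.1
  symm := ⟨fun _ _ h => h.symm⟩
  loopless := ⟨by
    intro a h
    rw [disjoint_self] at h
    have h2 := a.2
    simp [h, Finset.bot_eq_empty] at h2⟩

/-- An induced matching: a set of edges of `G` pairwise at distance at least 3. -/
def IsInducedMatching {V : Type*} (G : SimpleGraph V) (M : Set (Sym2 V)) : Prop :=
  M ⊆ G.edgeSet ∧ ∀ e ∈ M, ∀ f ∈ M, e ≠ f → ¬ DistLE2 G e f

instance : DecidableRel petersen.Adj := fun a b => by unfold petersen; infer_instance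

instance : ∀ e f : Sym2 PV, Decidable (EdgeAdj e f) := fun e f => by
  unfold EdgeAdj; infer_instance

instance : ∀ e f : Sym2 PV, Decidable (DistLE2 petersen e f) := fun e f => by
  unfold DistLE2
  have H : ∀ p : Sym2 PV → Prop, ∀ _ : DecidablePred p,
      Decidable (∃ g ∈ petersen.edgeSet, p g) := by
    intro p hp
    exact decidable_of_iff (∃ g ∈ petersen.edgeFinset, p g) (by simp)
  have := H (fun g => EdgeAdj e g ∧ EdgeAdj g f) inferInstance
  exact instDecidableOr

/-- The color classes of the canonical strong edge coloring: edges avoiding `i`. -/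
def classF (i : Fin 5) : Finset (Sym2 PV) :=
  petersen.edgeFinset.filter (fun e => ∀ v ∈ e, i ∉ v.1)

set_option synthInstance.maxHeartbeats 2000000 in
set_option synthInstance.maxSize 2000 in
set_option maxHeartbeats 4000000 in
set_option maxRecDepth 100000 in
theorem no4 : ∀ e1 ∈ petersen.edgeFinset, ∀ e2 ∈ petersen.edgeFinset,
    ¬ DistLE2 petersen e1 e2 → e1 ≠ e2 →
    ∀ e3 ∈ petersen.edgeFinset, ¬ DistLE2 petersen e1 e3 → ¬ DistLE2 petersen e2 e3 →
    e1 ≠ e3 → e2 ≠ e3 →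
    ∀ e4 ∈ petersen.edgeFinset, ¬ DistLE2 petersen e1 e4 → ¬ DistLE2 petersen e2 e4 →
    ¬ DistLE2 petersen e3 e4 → e1 ≠ e4 → e2 ≠ e4 → e3 ≠ e4 → False := by decide

set_option synthInstance.maxHeartbeats 2000000 in
set_option synthInstance.maxSize 2000 in
set_option maxHeartbeats 4000000 in
set_option maxRecDepth 100000 in
theorem classF_far : ∀ i : Fin 5, ∀ e ∈ classF i, ∀ f ∈ classF i, e ≠ f →
    ¬ DistLE2 petersen e f := by decide

theorem classF_card : ∀ i : Fin 5, (classF i).card = 3 := by decide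

theorem classF_disj : ∀ i j : Fin 5, i ≠ j → Disjoint (classF i) (classF j) := by decide

theorem classF_cover : ∀ e : Sym2 PV, (∃ i, e ∈ classF i) ↔ e ∈ petersen.edgeFinset := by decide

theorem matching_le_three (M : Set (Sym2 PV)) (hM : IsInducedMatching petersen M) :
    M.ncard ≤ 3 := by
  by_contra h
  push_neg at h
  have hfin : M.Finite := Set.Finite.subset (Set.toFinite _) hM.1
  have hcard : 4 ≤ hfin.toFinset.card := by
    rw [← Set.ncard_eq_toFinset_card M hfin]; omega
  obtain ⟨t, hts, htc⟩ := Finset.exists_subset_card_eq hcard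
  have h0 : 0 < t.card := by omega
  obtain ⟨a, ha⟩ := Finset.card_pos.mp h0
  have h3 : (t.erase a).card = 3 := by rw [Finset.card_erase_of_mem ha, htc]
  obtain ⟨b, c, d, hbc, hbd, hcd, habc⟩ := Finset.card_eq_three.mp h3
  have hb : b ∈ t.erase a := by rw [habc]; simp
  have hc : c ∈ t.erase a := by rw [habc]; simp
  have hd : d ∈ t.erase a := by rw [habc]; simp
  have hab : a ≠ b := fun h => (Finset.mem_erase.mp hb).1 h.symm
  have hac : a ≠ c := fun h => (Finset.mem_erase.mp hc).1 h.symm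
  have had : a ≠ d := fun h => (Finset.mem_erase.mp hd).1 h.symm
  have memM : ∀ x ∈ t, x ∈ M := fun x hx => hfin.mem_toFinset.mp (hts hx)
  have haM := memM a ha
  have hbM := memM b (Finset.mem_of_mem_erase hb)
  have hcM := memM c (Finset.mem_of_mem_erase hc)
  have hdM := memM d (Finset.mem_of_mem_erase hd)
  have memE : ∀ x ∈ M, x ∈ petersen.edgeFinset := fun x hx =>
    (SimpleGraph.mem_edgeFinset).mpr (hM.1 hx)
  exact no4 a (memE a haM) b (memE b hbM) (hM.2 a haM b hbM hab) hab
    c (memE c hcM) (hM.2 a haM c hcM hac) (hM.2 b hbM c hcM hbc) hac hbc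
    d (memE d hdM) (hM.2 a haM d hdM had) (hM.2 b hbM d hdM hbd)
    (hM.2 c hcM d hdM hcd) had hbd hcd

theorem classF_matching (i : Fin 5) : IsInducedMatching petersen (↑(classF i) : Set (Sym2 PV)) := by
  constructor
  · intro e he
    simp only [Finset.mem_coe, classF, Finset.mem_filter, SimpleGraph.mem_edgeFinset] at he
    exact he.1
  · intro e he f hf hne
    exact classF_far i e he f hf hne

/-- Every maximum induced matching of the Petersen graph has exactly 3 edges, and the
edges of the Petersen graph partition into 5 pairwise disjoint induced matchings of size 3. -/
theorem petersen_maximum_induced_matchings :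
    (∀ M : Set (Sym2 PV), IsInducedMatching petersen M →
      (∀ M' : Set (Sym2 PV), IsInducedMatching petersen M' → M'.ncard ≤ M.ncard) →
      M.ncard = 3) ∧
    (∃ 𝓜 : Fin 5 → Set (Sym2 PV),
      (∀ i, IsInducedMatching petersen (𝓜 i) ∧ (𝓜 i).ncard = 3) ∧
      (∀ i j, i ≠ j → Disjoint (𝓜 i) (𝓜 j)) ∧
      (⋃ i, 𝓜 i) = petersen.edgeSet) := by
  constructor
  · intro M hM hmax
    have h1 : M.ncard ≤ 3 := matching_le_three M hM
    have h2 := hmax _ (classF_matching 0)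
    rw [Set.ncard_coe_finset, classF_card 0] at h2
    omega
  · refine ⟨fun i => ↑(classF i), fun i => ⟨classF_matching i, ?_⟩, fun i j hij => ?_, ?_⟩
    · rw [Set.ncard_coe_finset, classF_card i]
    · exact Finset.disjoint_coe.mpr (classF_disj i j hij)
    · ext e
      simp only [Set.mem_iUnion, Finset.mem_coe, ← SimpleGraph.mem_edgeFinset]
      exact classF_cover e
end

section
/- Suppose the uncolored edges of a graph are partitioned into m groups of 3 edges each, where within each group the available color lists are pairwise disjoint and each list has size at least 6, with the property that only edges in the same group may share a color, for m ≤ 4. Then a valid coloring exists: one can pick a color for each edge from its list so that edges in different groups receive distinct colors. -/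
open SimpleGraph

/-- If at most 4 groups of 3 edges each have, within each group, pairwise disjoint
available lists of size at least 6, then one can pick a color for each edge from its list
so that edges in different groups receive distinct colors. -/
theorem groups_of_three_disjoint_lists_colorable (m : ℕ) (hm : m ≤ 4)
    (A : Fin m × Fin 3 → Finset ℕ) (hsize : ∀ p, 6 ≤ (A p).card)
    (hdisj : ∀ p q : Fin m × Fin 3, p.1 = q.1 → p ≠ q → Disjoint (A p) (A q)) :
    ∃ f : Fin m × Fin 3 → ℕ, (∀ p, f p ∈ A p) ∧
      ∀ p q : Fin m × Fin 3, p.1 ≠ q.1 → f p ≠ f q := by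
  classical
  have hall : ∀ s : Finset (Fin m × Fin 3), s.card ≤ (s.biUnion A).card := by
    intro s
    rcases s.eq_empty_or_nonempty with rfl | hs
    · simp
    · obtain ⟨p₀, hp₀⟩ := hs
      have hmpos : (Finset.univ : Finset (Fin m)).Nonempty := ⟨p₀.1, Finset.mem_univ _⟩
      obtain ⟨i₀, -, hi₀⟩ := Finset.exists_max_image Finset.univ
        (fun i : Fin m => (s.filter (fun p : Fin m × Fin 3 => p.1 = i)).card) hmpos
      have h1 : s.card ≤ 4 * (s.filter (fun p => p.1 = i₀)).card := by
        have := Finset.card_eq_sum_card_fiberwise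
          (f := fun p : Fin m × Fin 3 => p.1) (s := s) (t := Finset.univ)
          (fun x _ => Finset.mem_univ _)
        calc s.card = ∑ i : Fin m, (s.filter (fun p => p.1 = i)).card := this
          _ ≤ ∑ _i : Fin m, (s.filter (fun p => p.1 = i₀)).card := Finset.sum_le_sum (fun i _ => hi₀ i (Finset.mem_univ _))
          _ = m * (s.filter (fun p => p.1 = i₀)).card := by simp [Finset.sum_const, mul_comm]
          _ ≤ 4 * (s.filter (fun p => p.1 = i₀)).card := Nat.mul_le_mul_right (s.filter (fun p => p.1 = i₀)).card hm
      have h2 : 6 * (s.filter (fun p => p.1 = i₀)).card ≤ ((s.filter (fun p => p.1 = i₀)).biUnion A).card := by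
        rw [Finset.card_biUnion]
        · calc 6 * (s.filter (fun p => p.1 = i₀)).card = ∑ _p ∈ s.filter (fun p => p.1 = i₀), 6 := by
                simp [mul_comm]
            _ ≤ ∑ p ∈ s.filter (fun p => p.1 = i₀), (A p).card :=
                Finset.sum_le_sum (fun p _ => hsize p)
        · intro p hp q hq hpq
          exact hdisj p q (by
            simp only [Finset.mem_coe, Finset.mem_filter] at hp hq
            rw [hp.2, hq.2]) hpq
      have h3 : ((s.filter (fun p => p.1 = i₀)).biUnion A).card ≤ (s.biUnion A).card :=
        Finset.card_le_card (Finset.biUnion_subset_biUnion_of_subset_left _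
          (Finset.filter_subset _ _))
      omega
  obtain ⟨f, hinj, hmem⟩ := (Finset.all_card_le_biUnion_card_iff_exists_injective A).mp hall
  exact ⟨f, hmem, fun p q h hf => h (by rw [hinj hf])⟩
end
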